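/- Fix λ > 0 and integers n, d ≥ 1. The image of the map X ↦ Φ_λ(X) = Xᵀ(XXᵀ + λI)⁻¹ over all X ∈ ℝ^{n×d} is exactly the set of matrices Φ ∈ ℝ^{d×n} whose ℓ²→ℓ² operator norm is at most 1/(2√λ), i.e. {Φ ∈ ℝ^{d×n} : ∀ v ∈ ℝ^n, ‖Φv‖ ≤ ‖v‖/(2√λ)}. -/

import Mathlib

/-!
Write `M = ΦᵀΦ`. The norm bound on `Φ` says exactly that `1 - 4λM` is positive semidefinite.
If `Φ = Xᵀ C⁻¹` with `C = XXᵀ + λ`, then `D = C⁻¹` satisfies `M = D - λD²`, so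
`1 - 4λM = (1 - 2λD)²`. Conversely, if `1 - 4λM = S²` with `S ≥ 0`, then `D = (1 + S)/(2λ)` is
positive definite with `M = D - λD²`, and `X = D⁻¹Φᵀ` satisfies `XXᵀ + λ = D⁻¹`, hence
`Xᵀ(XXᵀ + λ)⁻¹ = Φ`.
-/

open Matrix
open scoped MatrixOrder

variable {m n d : Type*} [Fintype m] [Fintype n] [Fintype d] [DecidableEq n]

omit [Fintype n] [DecidableEq n] in
theorem norm_sq_euclideanSpace_equiv_symm (x : m → ℝ) :
    ‖(EuclideanSpace.equiv m ℝ).symm x‖ ^ 2 = x ⬝ᵥ x := by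
  rw [← real_inner_self_eq_norm_sq]; rfl

theorem norm_mulVec_le_div_iff_posSemidef (Φ : Matrix m n ℝ) {c : ℝ} (hc : 0 < c) :
    (∀ v : EuclideanSpace ℝ n,
        ‖(EuclideanSpace.equiv m ℝ).symm (Φ *ᵥ (fun i => v i))‖ ≤ ‖v‖ / c) ↔
      (1 - c ^ 2 • (Φᵀ * Φ)).PosSemidef := by
  have hHerm : (1 - c ^ 2 • (Φᵀ * Φ)).IsHermitian :=
    isHermitian_one.sub ((isHermitian_conjTranspose_mul_self Φ).smul (IsSelfAdjoint.all _))
  have hquad (x : n → ℝ) :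
      star x ⬝ᵥ ((1 - c ^ 2 • (Φᵀ * Φ)) *ᵥ x) = x ⬝ᵥ x - c ^ 2 * ((Φ *ᵥ x) ⬝ᵥ (Φ *ᵥ x)) := by
    simp [sub_mulVec, smul_mulVec, ← mulVec_mulVec, dotProduct_sub, dotProduct_smul,
      dotProduct_mulVec, vecMul_transpose]
  have hle (x : n → ℝ) :
      ‖(EuclideanSpace.equiv m ℝ).symm (Φ *ᵥ x)‖ ≤ ‖(EuclideanSpace.equiv n ℝ).symm x‖ / c ↔
        c ^ 2 * ((Φ *ᵥ x) ⬝ᵥ (Φ *ᵥ x)) ≤ x ⬝ᵥ x := by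
    rw [le_div_iff₀ hc, ← norm_sq_euclideanSpace_equiv_symm (Φ *ᵥ x),
      ← norm_sq_euclideanSpace_equiv_symm x, ← mul_pow, mul_comm c,
      pow_le_pow_iff_left₀ (by positivity) (by positivity) two_ne_zero]
  rw [posSemidef_iff_dotProduct_mulVec]
  simp only [hHerm, true_and, hquad, sub_nonneg, ← hle]
  exact ⟨fun h x => h ((EuclideanSpace.equiv n ℝ).symm x), fun h v => h v.ofLp⟩

noncomputable def ridgeOperator (lam : ℝ) (X : Matrix n d ℝ) : Matrix d n ℝ :=
  Xᵀ * (X * Xᵀ + lam • (1 : Matrix n n ℝ))⁻¹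

theorem posDef_mul_transpose_add_smul_one (X : Matrix n d ℝ) {lam : ℝ} (hlam : 0 < lam) :
    (X * Xᵀ + lam • (1 : Matrix n n ℝ)).PosDef :=
  PosDef.posSemidef_add (posSemidef_self_mul_conjTranspose X) (PosDef.one.smul hlam)

theorem transpose_mul_self_ridgeOperator (X : Matrix n d ℝ) {lam : ℝ} (hlam : 0 < lam) :
    (ridgeOperator lam X)ᵀ * ridgeOperator lam X =
      (X * Xᵀ + lam • (1 : Matrix n n ℝ))⁻¹ -
        lam • ((X * Xᵀ + lam • 1)⁻¹ * (X * Xᵀ + lam • 1)⁻¹) := by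
  have hC := posDef_mul_transpose_add_smul_one X hlam
  rw [ridgeOperator]
  set D := (X * Xᵀ + lam • (1 : Matrix n n ℝ))⁻¹
  have hDXX : D * (X * Xᵀ) = 1 - lam • D := by
    rw [eq_sub_iff_add_eq, ← mul_smul_one, ← mul_add,
      nonsing_inv_mul _ ((isUnit_iff_isUnit_det _).mp hC.isUnit)]
  calc (Xᵀ * D)ᵀ * (Xᵀ * D) = D * (X * Xᵀ) * D := by
        rw [transpose_mul, transpose_transpose, show Dᵀ = D from hC.inv.isHermitian]
        simp only [Matrix.mul_assoc]
    _ = D - lam • (D * D) := by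
        rw [hDXX, sub_mul, one_mul, smul_mul_assoc]

theorem posSemidef_one_sub_smul_of_eq_sub_smul_mul_self {D M : Matrix n n ℝ} {lam : ℝ}
    (hD : D.IsHermitian) (hM : M = D - lam • (D * D)) : (1 - (4 * lam) • M).PosSemidef := by
  have : 1 - (4 * lam) • M = (1 - (2 * lam) • D)ᴴ * (1 - (2 * lam) • D) := by
    rw [hM, conjTranspose_sub, conjTranspose_one, conjTranspose_smul, hD.eq, star_trivial]
    simp only [sub_mul, mul_sub, one_mul, mul_one, smul_sub, mul_smul_comm, smul_mul_assoc]
    module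
  rw [this]
  exact posSemidef_conjTranspose_mul_self _

theorem exists_posDef_eq_sub_smul_mul_self {M : Matrix n n ℝ} {lam : ℝ} (hlam : 0 < lam)
    (hM : (1 - (4 * lam) • M).PosSemidef) :
    ∃ D : Matrix n n ℝ, D.PosDef ∧ M = D - lam • (D * D) := by
  set S := CFC.sqrt (1 - (4 * lam) • M)
  have hS : S * S = 1 - (4 * lam) • M := CFC.sqrt_mul_sqrt_self _ hM.nonneg
  refine ⟨(2 * lam)⁻¹ • (1 + S),
    (PosDef.one.add_posSemidef (CFC.sqrt_nonneg _).posSemidef).smul (by positivity), ?_⟩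
  have : (1 + S) * (1 + S) = (2 : ℝ) • (1 + S) - (4 * lam) • M := by
    simp only [add_mul, mul_add, one_mul, mul_one, hS]; module
  rw [smul_mul_smul_comm, this]
  match_scalars <;> field_simp <;> ring

theorem exists_ridgeOperator_eq {Φ : Matrix d n ℝ} {D : Matrix n n ℝ} (hD : D.PosDef) {lam : ℝ}
    (hΦ : Φᵀ * Φ = D - lam • (D * D)) : ∃ X : Matrix n d ℝ, ridgeOperator lam X = Φ := by
  have hdet : IsUnit D.det := (isUnit_iff_isUnit_det D).mp hD.isUnit
  have hsymm : D⁻¹ᵀ = D⁻¹ := hD.inv.isHermitian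
  have hC : D⁻¹ * Φᵀ * (D⁻¹ * Φᵀ)ᵀ + lam • 1 = D⁻¹ := by
    calc D⁻¹ * Φᵀ * (D⁻¹ * Φᵀ)ᵀ + lam • 1 = D⁻¹ * (Φᵀ * Φ) * D⁻¹ + lam • 1 := by
          rw [transpose_mul, transpose_transpose, hsymm]
          simp only [Matrix.mul_assoc]
      _ = D⁻¹ := by
          rw [hΦ, mul_sub, sub_mul, nonsing_inv_mul _ hdet, one_mul, mul_smul_comm,
            smul_mul_assoc, ← Matrix.mul_assoc, nonsing_inv_mul _ hdet, one_mul,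
            mul_nonsing_inv _ hdet]
          abel
  refine ⟨D⁻¹ * Φᵀ, ?_⟩
  rw [ridgeOperator, hC, nonsing_inv_nonsing_inv _ hdet, transpose_mul, transpose_transpose, hsymm,
    Matrix.mul_assoc, nonsing_inv_mul _ hdet, Matrix.mul_one]

theorem ridge_operator_image_eq_opNorm_ball_general
    (n d : ℕ) (lam : ℝ) (hlam : 0 < lam) :
    {Φ : Matrix (Fin d) (Fin n) ℝ | ∃ X : Matrix (Fin n) (Fin d) ℝ,
        Φ = Xᵀ * (X * Xᵀ + lam • (1 : Matrix (Fin n) (Fin n) ℝ))⁻¹} =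
    {Φ : Matrix (Fin d) (Fin n) ℝ | ∀ v : EuclideanSpace ℝ (Fin n),
        ‖(EuclideanSpace.equiv (Fin d) ℝ).symm (Matrix.mulVec Φ (fun i => v i))‖
          ≤ ‖v‖ / (2 * Real.sqrt lam)} := by
  ext Φ
  have hc : (2 * Real.sqrt lam) ^ 2 = 4 * lam := by
    rw [mul_pow, Real.sq_sqrt hlam.le]; norm_num
  rw [Set.mem_ofPred_eq, Set.mem_ofPred_eq,
    norm_mulVec_le_div_iff_posSemidef Φ (by positivity), hc]
  constructor
  · rintro ⟨X, rfl⟩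
    exact posSemidef_one_sub_smul_of_eq_sub_smul_mul_self
      (posDef_mul_transpose_add_smul_one X hlam).inv.isHermitian
      (transpose_mul_self_ridgeOperator X hlam)
  · intro h
    obtain ⟨D, hD, hΦ⟩ := exists_posDef_eq_sub_smul_mul_self hlam h
    obtain ⟨X, hX⟩ := exists_ridgeOperator_eq hD hΦ
    exact ⟨X, hX.symm⟩

/-- The image of the map `X ↦ Φ_λ(X) = Xᵀ(XXᵀ + λI)⁻¹` over all
`X ∈ ℝ^{n×d}` is exactly the set of `d×n` matrices of ℓ²→ℓ² operator norm at most `1/(2√λ)`. -/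
theorem ridge_operator_image_eq_opNorm_ball
    (n d : ℕ) (hn : 1 ≤ n) (hd : 1 ≤ d) (lam : ℝ) (hlam : 0 < lam) :
    {Φ : Matrix (Fin d) (Fin n) ℝ | ∃ X : Matrix (Fin n) (Fin d) ℝ,
        Φ = Xᵀ * (X * Xᵀ + lam • (1 : Matrix (Fin n) (Fin n) ℝ))⁻¹} =
    {Φ : Matrix (Fin d) (Fin n) ℝ | ∀ v : EuclideanSpace ℝ (Fin n),
        ‖(EuclideanSpace.equiv (Fin d) ℝ).symm (Matrix.mulVec Φ (fun i => v i))‖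
          ≤ ‖v‖ / (2 * Real.sqrt lam)} :=
  ridge_operator_image_eq_opNorm_ball_general n d lam hlam
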